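/- Let 𝓖 be a generalized hexagon with parameters q, q whose points are all the points of a polar space of type Sp(6,q) or O(7,q) and whose lines are certain totally isotropic/singular lines, such that W₂(x) = x^⊥ for every point x (distance ≤ 2 equals perpendicularity). Let a, b be opposite points (distance 3) and H = ⟨W(a), W(b)⟩ where W(x) is the plane spanned by the lines through x. Then H = E ⊕ F where E and F are totally isotropic/singular planes such that for e ∈ E and f ∈ F, the line ⟨e,f⟩ is a hexagon line if and only if e and f are perpendicular; moreover for e ∈ E, W(e) = ⟨e, e^⊥ ∩ F⟩. -/

import Mathlib

open Module

variable {F : Type*} [Field F] [Fintype F]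
variable {V : Type*} [AddCommGroup V] [Module F V] [FiniteDimensional F V]

/-- An isotropic/singular point of the polar space defined by `B`. -/
def IsIsoPoint (B : LinearMap.BilinForm F V) (x : Submodule F V) : Prop :=
  finrank F x = 1 ∧ ∀ v ∈ x, B v v = 0

/-- Adjacency in the point graph of the hexagon with line set `𝓛`. -/
def HexAdj (B : LinearMap.BilinForm F V) (𝓛 : Set (Submodule F V))
    (x y : Submodule F V) : Prop :=
  IsIsoPoint B x ∧ IsIsoPoint B y ∧ x ≠ y ∧ ∃ L ∈ 𝓛, x ≤ L ∧ y ≤ L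

/-- `x` and `y` are at distance at most 2 in the point graph, i.e. `y ∈ W₂(x)`. -/
def HexDle2 (B : LinearMap.BilinForm F V) (𝓛 : Set (Submodule F V))
    (x y : Submodule F V) : Prop :=
  x = y ∨ HexAdj B 𝓛 x y ∨ ∃ z, HexAdj B 𝓛 x z ∧ HexAdj B 𝓛 z y

/-- `W(x) = W₁(x)`: the subspace spanned by the hexagon lines through `x`. -/
def HexW (𝓛 : Set (Submodule F V)) (x : Submodule F V) : Submodule F V :=
  sSup {L | L ∈ 𝓛 ∧ x ≤ L}

/-- `𝓛` is the line set of a generalized hexagon with parameters `q, q`, all of whose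
points are the isotropic/singular points of the polar space of `B`, naturally embedded:
lines are totally isotropic lines, every point is on `q+1` lines, the point graph has
diameter 3, there are no short circuits (unique line through two collinear points, all
triangles lie on lines, unique midpoint for points at distance 2), distance at most 2
coincides with perpendicularity (`W₂(x) = x^⊥`), and each `W(x)` is a plane. -/
structure IsHexagonEmbedding (B : LinearMap.BilinForm F V) (𝓛 : Set (Submodule F V)) :
    Prop where
  lines_rank : ∀ L ∈ 𝓛, finrank F L = 2
  lines_isotropic : ∀ L ∈ 𝓛, ∀ u ∈ L, ∀ w ∈ L, B u w = 0
  point_on_line : ∀ x, IsIsoPoint B x → ∃ L ∈ 𝓛, x ≤ L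
  lines_per_point : ∀ x, IsIsoPoint B x →
    Nat.card {L : Submodule F V // L ∈ 𝓛 ∧ x ≤ L} = Fintype.card F + 1
  unique_line : ∀ x y L L', L ∈ 𝓛 → L' ∈ 𝓛 → IsIsoPoint B x → IsIsoPoint B y → x ≠ y →
    x ≤ L → y ≤ L → x ≤ L' → y ≤ L' → L = L'
  no_triangle : ∀ x y z, HexAdj B 𝓛 x y → HexAdj B 𝓛 y z → HexAdj B 𝓛 x z →
    ∃ L ∈ 𝓛, x ≤ L ∧ y ≤ L ∧ z ≤ L
  unique_mid : ∀ x y, IsIsoPoint B x → IsIsoPoint B y → x ≠ y → ¬ HexAdj B 𝓛 x y →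
    HexDle2 B 𝓛 x y → ∃! z, HexAdj B 𝓛 x z ∧ HexAdj B 𝓛 z y
  diam3 : ∀ x y, IsIsoPoint B x → IsIsoPoint B y → ¬ HexDle2 B 𝓛 x y →
    ∃ z, HexAdj B 𝓛 x z ∧ HexDle2 B 𝓛 z y
  opp_exists : ∃ x y, IsIsoPoint B x ∧ IsIsoPoint B y ∧ ¬ HexDle2 B 𝓛 x y
  perp_iff : ∀ x y, IsIsoPoint B x → IsIsoPoint B y →
    (HexDle2 B 𝓛 x y ↔ ∀ u ∈ x, ∀ v ∈ y, B u v = 0)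
  w_plane : ∀ x, IsIsoPoint B x → finrank F (HexW 𝓛 x) = 3


set_option linter.unusedSectionVars false

/-- perpendicularity of two subspaces -/
def Perp (B : LinearMap.BilinForm F V) (x y : Submodule F V) : Prop :=
  ∀ u ∈ x, ∀ v ∈ y, B u v = 0

theorem Perp.symm {B : LinearMap.BilinForm F V} (hrefl : B.IsRefl) {x y : Submodule F V}
    (h : Perp B x y) : Perp B y x := fun u hu v hv => hrefl v u (h v hv u hu)

theorem Perp.mono {B : LinearMap.BilinForm F V} {x y x' y' : Submodule F V}
    (h : Perp B x y) (hx : x' ≤ x) (hy : y' ≤ y) : Perp B x' y' :=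
  fun u hu v hv => h u (hx hu) v (hy hv)

theorem Perp.sup_right {B : LinearMap.BilinForm F V} {x y z : Submodule F V}
    (h1 : Perp B x y) (h2 : Perp B x z) : Perp B x (y ⊔ z) := by
  intro u hu v hv
  rcases Submodule.mem_sup.1 hv with ⟨a, ha, b, hb, rfl⟩
  rw [map_add, h1 u hu a ha, h2 u hu b hb, add_zero]

theorem Perp.sup_left {B : LinearMap.BilinForm F V} {x y z : Submodule F V}
    (h1 : Perp B x z) (h2 : Perp B y z) : Perp B (x ⊔ y) z := by
  intro u hu v hv
  rcases Submodule.mem_sup.1 hu with ⟨a, ha, b, hb, rfl⟩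
  rw [map_add, LinearMap.add_apply, h1 a ha v hv, h2 b hb v hv, add_zero]

/-- totally isotropic -/
def TotIso (B : LinearMap.BilinForm F V) (U : Submodule F V) : Prop := Perp B U U

theorem TotIso.sup {B : LinearMap.BilinForm F V} {M N : Submodule F V}
    (hM : TotIso B M) (hN : TotIso B N) (h : Perp B M N) (h' : Perp B N M) :
    TotIso B (M ⊔ N) :=
  Perp.sup_left (Perp.sup_right hM h) (Perp.sup_right h' hN)

-- point basics
theorem point_exists_span {x : Submodule F V} (hx : finrank F x = 1) :
    ∃ v : V, v ≠ 0 ∧ x = Submodule.span F {v} := by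
  have hbot : x ≠ ⊥ := by
    intro h; rw [h, finrank_bot] at hx; exact one_ne_zero hx.symm
  obtain ⟨v, hv, hv0⟩ := Submodule.exists_mem_ne_zero_of_ne_bot hbot
  refine ⟨v, hv0, ?_⟩
  have h1 : Submodule.span F {v} ≤ x := by
    rw [Submodule.span_le, Set.singleton_subset_iff]; exact hv
  exact (Submodule.eq_of_le_of_finrank_le h1 (by
    rw [finrank_span_singleton hv0, hx])).symm

theorem point_eq_span {x : Submodule F V} (hx : finrank F x = 1) {v : V}
    (hv : v ∈ x) (hv0 : v ≠ 0) : x = Submodule.span F {v} := by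
  have h1 : Submodule.span F {v} ≤ x := by
    rw [Submodule.span_le, Set.singleton_subset_iff]; exact hv
  exact (Submodule.eq_of_le_of_finrank_le h1 (by
    rw [finrank_span_singleton hv0, hx])).symm

theorem point_le_of_mem {x y : Submodule F V} (hx : finrank F x = 1) {v : V}
    (hv : v ∈ x) (hv0 : v ≠ 0) (h : v ∈ y) : x ≤ y := by
  rw [point_eq_span hx hv hv0, Submodule.span_le, Set.singleton_subset_iff]; exact h

theorem point_inf_eq_bot {x y : Submodule F V} (hx : finrank F x = 1)
    (hy : finrank F y = 1) (hxy : x ≠ y) : x ⊓ y = ⊥ := by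
  by_contra h
  obtain ⟨v, hv, hv0⟩ := Submodule.exists_mem_ne_zero_of_ne_bot h
  exact hxy ((point_eq_span hx hv.1 hv0).trans (point_eq_span hy hv.2 hv0).symm)

theorem point_sup_finrank {x y : Submodule F V} (hx : finrank F x = 1)
    (hy : finrank F y = 1) (hxy : x ≠ y) : finrank F (x ⊔ y : Submodule F V) = 2 := by
  have := Submodule.finrank_sup_add_finrank_inf_eq x y
  rw [point_inf_eq_bot hx hy hxy, finrank_bot, hx, hy] at this
  omega

section Aux2
variable {B : LinearMap.BilinForm F V} {𝓛 : Set (Submodule F V)}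

theorem HexAdj.symm' {x y : Submodule F V} (h : HexAdj B 𝓛 x y) : HexAdj B 𝓛 y x := by
  obtain ⟨hx, hy, hne, L, hL, h1, h2⟩ := h
  exact ⟨hy, hx, hne.symm, L, hL, h2, h1⟩

theorem HexDle2.symm' {x y : Submodule F V} (h : HexDle2 B 𝓛 x y) : HexDle2 B 𝓛 y x := by
  rcases h with h | h | ⟨z, h1, h2⟩
  · exact Or.inl h.symm
  · exact Or.inr (Or.inl h.symm')
  · exact Or.inr (Or.inr ⟨z, h2.symm', h1.symm'⟩)

theorem HexAdj.dle2 {x y : Submodule F V} (h : HexAdj B 𝓛 x y) : HexDle2 B 𝓛 x y :=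
  Or.inr (Or.inl h)

theorem dle2_of_adj_adj {x y z : Submodule F V} (h1 : HexAdj B 𝓛 x z) (h2 : HexAdj B 𝓛 z y) :
    HexDle2 B 𝓛 x y := Or.inr (Or.inr ⟨z, h1, h2⟩)

theorem HexAdj.sup_mem {x y : Submodule F V} (h : HexAdj B 𝓛 x y)
    (hhex : IsHexagonEmbedding B 𝓛) : x ⊔ y ∈ 𝓛 := by
  obtain ⟨hx, hy, hne, L, hL, h1, h2⟩ := h
  have hsup : x ⊔ y ≤ L := sup_le h1 h2
  have : x ⊔ y = L := Submodule.eq_of_le_of_finrank_le hsup (by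
    rw [hhex.lines_rank L hL, point_sup_finrank hx.1 hy.1 hne])
  rw [this]; exact hL

theorem adj_of_sup_mem {x y : Submodule F V} (hx : IsIsoPoint B x) (hy : IsIsoPoint B y)
    (hne : x ≠ y) (h : x ⊔ y ∈ 𝓛) : HexAdj B 𝓛 x y :=
  ⟨hx, hy, hne, x ⊔ y, h, le_sup_left, le_sup_right⟩

theorem perp_of_dle2 (hhex : IsHexagonEmbedding B 𝓛) {x y : Submodule F V}
    (hx : IsIsoPoint B x) (hy : IsIsoPoint B y) (h : HexDle2 B 𝓛 x y) : Perp B x y :=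
  fun u hu v hv => (hhex.perp_iff x y hx hy).1 h u hu v hv

theorem dle2_of_perp (hhex : IsHexagonEmbedding B 𝓛) {x y : Submodule F V}
    (hx : IsIsoPoint B x) (hy : IsIsoPoint B y) (h : Perp B x y) : HexDle2 B 𝓛 x y :=
  (hhex.perp_iff x y hx hy).2 h

theorem HexAdj.perp (hhex : IsHexagonEmbedding B 𝓛) {x y : Submodule F V}
    (h : HexAdj B 𝓛 x y) : Perp B x y :=
  perp_of_dle2 hhex h.1 h.2.1 h.dle2

-- W basics
theorem line_le_HexW {L x : Submodule F V} (hL : L ∈ 𝓛) (hx : x ≤ L) : L ≤ HexW 𝓛 x :=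
  le_sSup ⟨hL, hx⟩

theorem point_le_HexW (hhex : IsHexagonEmbedding B 𝓛) {x : Submodule F V}
    (hx : IsIsoPoint B x) : x ≤ HexW 𝓛 x := by
  obtain ⟨L, hL, hxL⟩ := hhex.point_on_line x hx
  exact hxL.trans (line_le_HexW hL hxL)

theorem isoPoint_of_le_totIso {U p : Submodule F V} (hU : TotIso B U) (hle : p ≤ U)
    (hp : finrank F p = 1) : IsIsoPoint B p :=
  ⟨hp, fun v hv => hU v (hle hv) v (hle hv)⟩

theorem perp_span_span {s t : Set V} (h : ∀ u ∈ s, ∀ v ∈ t, B u v = 0) :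
    Perp B (Submodule.span F s) (Submodule.span F t) := by
  intro u hu v hv
  induction hu using Submodule.span_induction with
  | mem z hz =>
    induction hv using Submodule.span_induction with
    | mem w hw => exact h z hz w hw
    | zero => exact LinearMap.map_zero _
    | add w₁ w₂ _ _ ih1 ih2 => rw [map_add, ih1, ih2, add_zero]
    | smul c w _ ih => rw [map_smul, ih, smul_zero]
  | zero => simp
  | add z₁ z₂ _ _ ih1 ih2 => rw [map_add, LinearMap.add_apply, ih1, ih2, add_zero]
  | smul c z _ ih => rw [map_smul, LinearMap.smul_apply, ih, smul_zero]

theorem HexW_totIso (hhex : IsHexagonEmbedding B 𝓛) {x : Submodule F V}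
    (hx : IsIsoPoint B x) : TotIso B (HexW 𝓛 x) := by
  have hspan : HexW 𝓛 x = Submodule.span F (⋃ L ∈ {L | L ∈ 𝓛 ∧ x ≤ L}, (L : Set V)) := by
    apply le_antisymm
    · exact sSup_le fun L hL => fun v hv =>
        Submodule.subset_span (Set.mem_biUnion hL hv)
    · rw [Submodule.span_le]
      intro v hv
      simp only [Set.mem_iUnion] at hv
      obtain ⟨L, hL, hv⟩ := hv
      exact le_sSup hL hv
  rw [TotIso, hspan]
  apply perp_span_span
  intro u hu v hv
  simp only [Set.mem_iUnion] at hu hv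
  obtain ⟨L, ⟨hL, hxL⟩, hu⟩ := hu
  obtain ⟨L', ⟨hL', hxL'⟩, hv⟩ := hv
  -- u ∈ L, v ∈ L', both lines through x
  by_cases hu0 : u = 0
  · simp [hu0]
  by_cases hv0 : v = 0
  · simp [hv0]
  have hLiso : IsIsoPoint B (Submodule.span F {u}) :=
    ⟨finrank_span_singleton hu0, by
      intro w hw
      rcases Submodule.mem_span_singleton.1 hw with ⟨c, rfl⟩
      simp [map_smul, hhex.lines_isotropic L hL u hu u hu]⟩
  have hL'iso : IsIsoPoint B (Submodule.span F {v}) :=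
    ⟨finrank_span_singleton hv0, by
      intro w hw
      rcases Submodule.mem_span_singleton.1 hw with ⟨c, rfl⟩
      simp [map_smul, hhex.lines_isotropic L' hL' v hv v hv]⟩
  have hxiso : IsIsoPoint B x := hx
  have hus : Submodule.span F {u} ≤ L := by
    rw [Submodule.span_le, Set.singleton_subset_iff]; exact hu
  have hvs : Submodule.span F {v} ≤ L' := by
    rw [Submodule.span_le, Set.singleton_subset_iff]; exact hv
  have hdle : HexDle2 B 𝓛 (Submodule.span F {u}) (Submodule.span F {v}) := by
    by_cases h1 : Submodule.span F {u} = Submodule.span F {v}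
    · exact Or.inl h1
    by_cases h2 : Submodule.span F {u} = x
    · by_cases h3 : Submodule.span F {v} = x
      · exact Or.inl (h2.trans h3.symm)
      · exact Or.inr (Or.inl ⟨hLiso, hL'iso, h1, L', hL', h2 ▸ hxL', hvs⟩)
    · by_cases h3 : Submodule.span F {v} = x
      · exact Or.inr (Or.inl ⟨hLiso, hL'iso, h1, L, hL, hus, h3 ▸ hxL⟩)
      · exact Or.inr (Or.inr ⟨x, ⟨hLiso, hxiso, h2, L, hL, hus, hxL⟩,
          ⟨hxiso, hL'iso, fun h => h3 h.symm, L', hL', hxL', hvs⟩⟩)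
  exact perp_of_dle2 hhex hLiso hL'iso hdle u (Submodule.mem_span_singleton_self u) v
    (Submodule.mem_span_singleton_self v)

end Aux2

section Aux3
variable {B : LinearMap.BilinForm F V} {𝓛 : Set (Submodule F V)}

theorem finite_submodule : Finite (Submodule F V) := by
  have : Finite V := Module.finite_of_finite F
  exact Finite.of_injective (fun p : Submodule F V => (p : Set V)) SetLike.coe_injective

/-- number of 1-dim subspaces of a 2-dim space is q+1 -/
theorem card_points_of_rank2 (C : Submodule F V) (hC : finrank F C = 2) :
    Nat.card {p : Submodule F V // p ≤ C ∧ finrank F p = 1} = Fintype.card F + 1 := by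
  classical
  have hVfin : Finite V := Module.finite_of_finite F
  letI : Fintype V := Fintype.ofFinite V
  set q := Fintype.card F with hqdef
  have hq : 2 ≤ q := Fintype.one_lt_card
  have hSubfin : Finite (Submodule F V) := finite_submodule
  letI : Fintype {p : Submodule F V // p ≤ C ∧ finrank F p = 1} := Fintype.ofFinite _
  set S := {p : Submodule F V // p ≤ C ∧ finrank F p = 1} with hS
  have φprop : ∀ v : {v : V // v ∈ C ∧ v ≠ 0},
      Submodule.span F {v.1} ≤ C ∧ finrank F (Submodule.span F {v.1}) = 1 := by
    intro v
    constructor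
    · rw [Submodule.span_le, Set.singleton_subset_iff]; exact v.2.1
    · exact finrank_span_singleton v.2.2
  set φ : {v : V // v ∈ C ∧ v ≠ 0} → S := fun v => ⟨Submodule.span F {v.1}, φprop v⟩ with hφ
  have hsigma : Fintype.card {v : V // v ∈ C ∧ v ≠ 0}
      = ∑ p : S, Fintype.card {v : {v : V // v ∈ C ∧ v ≠ 0} // φ v = p} := by
    rw [← Fintype.card_sigma]
    exact (Fintype.card_congr (Equiv.sigmaFiberEquiv φ)).symm
  have hfiber : ∀ p : S, Fintype.card {v : {v : V // v ∈ C ∧ v ≠ 0} // φ v = p} = q - 1 := by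
    intro p
    have e : {v : {v : V // v ∈ C ∧ v ≠ 0} // φ v = p} ≃ {w : ↥(p.1) // w ≠ 0} :=
      { toFun := fun v => ⟨⟨v.1.1, by
          have : Submodule.span F {v.1.1} = p.1 := congrArg Subtype.val v.2
          rw [← this]; exact Submodule.mem_span_singleton_self _⟩, by
          simp only [ne_eq, Submodule.mk_eq_zero]; exact v.1.2.2⟩
        invFun := fun w => ⟨⟨w.1.1, ⟨p.2.1 w.1.2, by
          intro h0; exact w.2 (Subtype.ext h0)⟩⟩, by
          apply Subtype.ext
          exact (point_eq_span p.2.2 w.1.2 (fun h0 => w.2 (Subtype.ext h0))).symm⟩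
        left_inv := fun v => by ext; rfl
        right_inv := fun w => by ext; rfl }
    rw [Fintype.card_congr e]
    have h1 : Fintype.card ↥(p.1) = q ^ 1 := by
      rw [card_eq_pow_finrank (K := F), p.2.2]
    rw [Fintype.card_subtype_compl, Fintype.card_subtype_eq, h1, pow_one]
  have hT : Fintype.card {v : V // v ∈ C ∧ v ≠ 0} = q ^ 2 - 1 := by
    have e : {v : V // v ∈ C ∧ v ≠ 0} ≃ {w : ↥C // w ≠ 0} :=
      { toFun := fun v => ⟨⟨v.1, v.2.1⟩, by
          simp only [ne_eq, Submodule.mk_eq_zero]; exact v.2.2⟩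
        invFun := fun w => ⟨w.1.1, ⟨w.1.2, fun h0 => w.2 (Subtype.ext h0)⟩⟩
        left_inv := fun v => by ext; rfl
        right_inv := fun w => by ext; rfl }
    rw [Fintype.card_congr e]
    have h1 : Fintype.card ↥C = q ^ 2 := by
      rw [card_eq_pow_finrank (K := F), hC]
    rw [Fintype.card_subtype_compl, Fintype.card_subtype_eq, h1]
  rw [hT, Finset.sum_congr rfl (fun p _ => hfiber p), Finset.sum_const, Finset.card_univ,
    smul_eq_mul] at hsigma
  obtain ⟨r, hr⟩ : ∃ r, q = r + 1 := ⟨q - 1, by omega⟩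
  have hr1 : 1 ≤ r := by omega
  have key : q ^ 2 - 1 = r * (r + 2) := by
    have : q ^ 2 = r * (r + 2) + 1 := by rw [hr]; ring
    omega
  rw [key, hr] at hsigma
  simp only [Nat.add_sub_cancel] at hsigma
  have : (r + 2) * r = Fintype.card S * r := by rw [← hsigma]; ring
  have hcard : Fintype.card S = r + 2 :=
    (Nat.eq_of_mul_eq_mul_right (by omega) this).symm
  rw [Nat.card_eq_fintype_card, hcard, hr]

theorem exists_two_lines (hhex : IsHexagonEmbedding B 𝓛) {x : Submodule F V}
    (hx : IsIsoPoint B x) :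
    ∃ L₁ L₂ : Submodule F V, L₁ ∈ 𝓛 ∧ L₂ ∈ 𝓛 ∧ x ≤ L₁ ∧ x ≤ L₂ ∧ L₁ ≠ L₂ := by
  classical
  have h := hhex.lines_per_point x hx
  have hfin : Finite {L : Submodule F V // L ∈ 𝓛 ∧ x ≤ L} :=
    Nat.finite_of_card_ne_zero (by rw [h]; omega)
  letI : Fintype {L : Submodule F V // L ∈ 𝓛 ∧ x ≤ L} := Fintype.ofFinite _
  rw [Nat.card_eq_fintype_card] at h
  have : Nontrivial {L : Submodule F V // L ∈ 𝓛 ∧ x ≤ L} := by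
    apply Fintype.one_lt_card_iff_nontrivial.1
    rw [h]
    have : 2 ≤ Fintype.card F := Fintype.one_lt_card
    omega
  obtain ⟨⟨L₁, h1⟩, ⟨L₂, h2⟩, hne⟩ := this
  exact ⟨L₁, L₂, h1.1, h2.1, h1.2, h2.2, fun h => hne (Subtype.ext h)⟩

theorem line_inf_line (hhex : IsHexagonEmbedding B 𝓛) {x L₁ L₂ : Submodule F V}
    (hx : IsIsoPoint B x) (h1 : L₁ ∈ 𝓛) (h2 : L₂ ∈ 𝓛) (hx1 : x ≤ L₁) (hx2 : x ≤ L₂)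
    (hne : L₁ ≠ L₂) : L₁ ⊓ L₂ = x := by
  have hle : x ≤ L₁ ⊓ L₂ := le_inf hx1 hx2
  have hr2 : finrank F L₁ = 2 := hhex.lines_rank L₁ h1
  have hrle : finrank F (L₁ ⊓ L₂ : Submodule F V) ≤ 1 := by
    by_contra h
    push_neg at h
    have e1 : L₁ ⊓ L₂ = L₁ := Submodule.eq_of_le_of_finrank_le inf_le_left (by omega)
    have e2 : L₁ ⊓ L₂ = L₂ := Submodule.eq_of_le_of_finrank_le inf_le_right (by
      rw [hhex.lines_rank L₂ h2]; omega)
    exact hne (e1.symm.trans e2)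
  exact (Submodule.eq_of_le_of_finrank_le hle (by rw [hx.1]; exact hrle)).symm

theorem HexW_eq_sup_lines (hhex : IsHexagonEmbedding B 𝓛) {x L₁ L₂ : Submodule F V}
    (hx : IsIsoPoint B x) (h1 : L₁ ∈ 𝓛) (h2 : L₂ ∈ 𝓛) (hx1 : x ≤ L₁) (hx2 : x ≤ L₂)
    (hne : L₁ ≠ L₂) : HexW 𝓛 x = L₁ ⊔ L₂ := by
  have hle : L₁ ⊔ L₂ ≤ HexW 𝓛 x := sup_le (line_le_HexW h1 hx1) (line_le_HexW h2 hx2)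
  have hinf : L₁ ⊓ L₂ = x := line_inf_line hhex hx h1 h2 hx1 hx2 hne
  have hr : finrank F (L₁ ⊔ L₂ : Submodule F V) = 3 := by
    have := Submodule.finrank_sup_add_finrank_inf_eq L₁ L₂
    rw [hinf, hx.1, hhex.lines_rank L₁ h1, hhex.lines_rank L₂ h2] at this
    omega
  exact (Submodule.eq_of_le_of_finrank_le hle (by rw [hhex.w_plane x hx, hr])).symm
end Aux3

section Aux4
variable {B : LinearMap.BilinForm F V} {𝓛 : Set (Submodule F V)}

/-- KEY: every 2-dim subspace of `W(x)` through `x` is a hexagon line. -/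
theorem line_of_le_HexW (hhex : IsHexagonEmbedding B 𝓛) {x M : Submodule F V}
    (hx : IsIsoPoint B x) (hxM : x ≤ M) (hMW : M ≤ HexW 𝓛 x) (hM2 : finrank F M = 2) :
    M ∈ 𝓛 := by
  classical
  obtain ⟨L₁, L₂, h1, h2, hx1, hx2, hne⟩ := exists_two_lines hhex hx
  have hW : HexW 𝓛 x = L₁ ⊔ L₂ := HexW_eq_sup_lines hhex hx h1 h2 hx1 hx2 hne
  have hW3 : finrank F (HexW 𝓛 x) = 3 := hhex.w_plane x hx
  -- pick complement C of x in W(x)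
  have hlt1 : x < L₁ := lt_of_le_of_ne hx1 (fun h => by
    have := hhex.lines_rank L₁ h1; rw [← h, hx.1] at this; omega)
  have hlt2 : x < L₂ := lt_of_le_of_ne hx2 (fun h => by
    have := hhex.lines_rank L₂ h2; rw [← h, hx.1] at this; omega)
  obtain ⟨w₁, hw₁L, hw₁x⟩ := SetLike.exists_of_lt hlt1
  obtain ⟨w₂, hw₂L, hw₂x⟩ := SetLike.exists_of_lt hlt2
  have hw₁0 : w₁ ≠ 0 := fun h => hw₁x (h ▸ x.zero_mem)
  have hw₂0 : w₂ ≠ 0 := fun h => hw₂x (h ▸ x.zero_mem)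
  have hinf : L₁ ⊓ L₂ = x := line_inf_line hhex hx h1 h2 hx1 hx2 hne
  have hwne : Submodule.span F {w₁} ≠ Submodule.span F {w₂} := by
    intro h
    have hw2in : w₂ ∈ Submodule.span F {w₁} := by
      rw [h]; exact Submodule.mem_span_singleton_self w₂
    have hsp1 : Submodule.span F {w₁} ≤ L₁ :=
      Submodule.span_le.2 (Set.singleton_subset_iff.2 hw₁L)
    have hmem : w₂ ∈ L₁ ⊓ L₂ := ⟨hsp1 hw2in, hw₂L⟩
    rw [hinf] at hmem
    have hsp2 : Submodule.span F {w₂} ≤ x :=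
      Submodule.span_le.2 (Set.singleton_subset_iff.2 hmem)
    exact hw₁x (hsp2 (by rw [← h]; exact Submodule.mem_span_singleton_self w₁))
  set C := Submodule.span F {w₁} ⊔ Submodule.span F {w₂} with hCdef
  have hC2 : finrank F C = 2 :=
    point_sup_finrank (finrank_span_singleton hw₁0) (finrank_span_singleton hw₂0) hwne
  have hCW : C ≤ HexW 𝓛 x := by
    rw [hW]
    apply sup_le
    · exact le_trans (by rw [Submodule.span_le, Set.singleton_subset_iff]; exact hw₁L) le_sup_left
    · exact le_trans (by rw [Submodule.span_le, Set.singleton_subset_iff]; exact hw₂L) le_sup_right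
  have hxC : x ⊔ C = HexW 𝓛 x := by
    have hL1 : L₁ ≤ x ⊔ C := by
      have : x ⊔ Submodule.span F {w₁} ≤ L₁ := sup_le hx1 (by
        rw [Submodule.span_le, Set.singleton_subset_iff]; exact hw₁L)
      have he : x ⊔ Submodule.span F {w₁} = L₁ := Submodule.eq_of_le_of_finrank_le this (by
        rw [hhex.lines_rank L₁ h1,
          point_sup_finrank hx.1 (finrank_span_singleton hw₁0) (fun h => hw₁x (by
            rw [h] at *; exact Submodule.mem_span_singleton_self w₁))])
      rw [← he]
      exact sup_le le_sup_left (le_trans le_sup_left le_sup_right)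
    have hL2 : L₂ ≤ x ⊔ C := by
      have : x ⊔ Submodule.span F {w₂} ≤ L₂ := sup_le hx2 (by
        rw [Submodule.span_le, Set.singleton_subset_iff]; exact hw₂L)
      have he : x ⊔ Submodule.span F {w₂} = L₂ := Submodule.eq_of_le_of_finrank_le this (by
        rw [hhex.lines_rank L₂ h2,
          point_sup_finrank hx.1 (finrank_span_singleton hw₂0) (fun h => hw₂x (by
            rw [h] at *; exact Submodule.mem_span_singleton_self w₂))])
      rw [← he]
      exact sup_le le_sup_left (le_trans le_sup_right le_sup_right)
    apply le_antisymm
    · exact sup_le (point_le_HexW hhex hx) hCW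
    · rw [hW]; exact sup_le hL1 hL2
  have hxCinf : x ⊓ C = ⊥ := by
    have := Submodule.finrank_sup_add_finrank_inf_eq x C
    rw [hxC, hW3, hx.1, hC2] at this
    rw [← Submodule.finrank_eq_zero (S := x ⊓ C)]
    omega
  -- the map from 2-spaces through x inside W(x) to points of C
  have inf_point : ∀ M' : Submodule F V, x ≤ M' → M' ≤ HexW 𝓛 x → finrank F M' = 2 →
      (M' ⊓ C ≤ C ∧ finrank F (M' ⊓ C : Submodule F V) = 1) := by
    intro M' hxM' hM'W hM'2
    refine ⟨inf_le_right, ?_⟩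
    have hsupW : M' ⊔ C ≤ HexW 𝓛 x := sup_le hM'W hCW
    have hsup3 : finrank F (M' ⊔ C : Submodule F V) = 3 := by
      have hle3 : finrank F (M' ⊔ C : Submodule F V) ≤ 3 := hW3 ▸ Submodule.finrank_mono hsupW
      have hge : finrank F C ≤ finrank F (M' ⊔ C : Submodule F V) :=
        Submodule.finrank_mono le_sup_right
    -- if equal 2, M' ≤ C, so x ≤ C, contradiction
      rcases Nat.lt_or_ge (finrank F (M' ⊔ C : Submodule F V)) 3 with h | h
      · exfalso
        have hCeq : C = M' ⊔ C := Submodule.eq_of_le_of_finrank_le le_sup_right (by omega)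
        have hxc : x ≤ C := by rw [hCeq]; exact hxM'.trans le_sup_left
        have heq : x ⊓ C = x := inf_eq_left.2 hxc
        rw [hxCinf] at heq
        have hx1 := hx.1
        rw [← heq, finrank_bot] at hx1
        omega
      · omega
    have := Submodule.finrank_sup_add_finrank_inf_eq M' C
    rw [hsup3, hM'2, hC2] at this
    omega
  -- recover M' from M' ⊓ C
  have recover : ∀ M' : Submodule F V, x ≤ M' → M' ≤ HexW 𝓛 x → finrank F M' = 2 →
      x ⊔ (M' ⊓ C) = M' := by
    intro M' hxM' hM'W hM'2
    have h1 := inf_point M' hxM' hM'W hM'2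
    have hle : x ⊔ (M' ⊓ C) ≤ M' := sup_le hxM' inf_le_left
    apply Submodule.eq_of_le_of_finrank_le hle
    have hxinf : x ⊓ (M' ⊓ C) = ⊥ := by
      rw [← le_bot_iff, ← hxCinf]
      exact le_inf inf_le_left (inf_le_right.trans inf_le_right)
    have := Submodule.finrank_sup_add_finrank_inf_eq x (M' ⊓ C)
    rw [hxinf, finrank_bot, hx.1, h1.2] at this
    omega
  classical
  letI : Fintype {L : Submodule F V // L ∈ 𝓛 ∧ x ≤ L} := by
    have : Finite (Submodule F V) := finite_submodule
    exact Fintype.ofFinite _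
  letI : Fintype {p : Submodule F V // p ≤ C ∧ finrank F p = 1} := by
    have : Finite (Submodule F V) := finite_submodule
    exact Fintype.ofFinite _
  set ψ : {L : Submodule F V // L ∈ 𝓛 ∧ x ≤ L} → {p : Submodule F V // p ≤ C ∧ finrank F p = 1} :=
    fun L => ⟨L.1 ⊓ C, inf_point L.1 L.2.2 (line_le_HexW L.2.1 L.2.2) (hhex.lines_rank L.1 L.2.1)⟩
    with hψ
  have hinj : Function.Injective ψ := by
    intro L L' h
    have h' : L.1 ⊓ C = L'.1 ⊓ C := congrArg Subtype.val h
    apply Subtype.ext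
    rw [← recover L.1 L.2.2 (line_le_HexW L.2.1 L.2.2) (hhex.lines_rank L.1 L.2.1), h',
      recover L'.1 L'.2.2 (line_le_HexW L'.2.1 L'.2.2) (hhex.lines_rank L'.1 L'.2.1)]
  have hsurj : Function.Surjective ψ := by
    have hbij : Function.Bijective ψ := (Nat.bijective_iff_injective_and_card ψ).2 ⟨hinj, by
      rw [hhex.lines_per_point x hx, card_points_of_rank2 C hC2]⟩
    exact hbij.2
  -- now apply to M
  obtain ⟨L, hL⟩ := hsurj ⟨M ⊓ C, inf_point M hxM hMW hM2⟩
  have h' : L.1 ⊓ C = M ⊓ C := congrArg Subtype.val hL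
  have : L.1 = M := by
    rw [← recover L.1 L.2.2 (line_le_HexW L.2.1 L.2.2) (hhex.lines_rank L.1 L.2.1), h',
      recover M hxM hMW hM2]
  rw [← this]
  exact L.2.1

/-- every point of W(x) other than x is collinear with x -/
theorem point_of_HexW (hhex : IsHexagonEmbedding B 𝓛) {x p : Submodule F V}
    (hx : IsIsoPoint B x) (hpW : p ≤ HexW 𝓛 x) (hp : finrank F p = 1) :
    p = x ∨ (x ⊔ p ∈ 𝓛 ∧ HexAdj B 𝓛 x p) := by
  by_cases hpx : p = x
  · exact Or.inl hpx
  right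
  have hpiso : IsIsoPoint B p := isoPoint_of_le_totIso (HexW_totIso hhex hx) hpW hp
  have hM2 : finrank F (x ⊔ p : Submodule F V) = 2 :=
    point_sup_finrank hx.1 hp (fun h => hpx h.symm)
  have hmem : x ⊔ p ∈ 𝓛 := line_of_le_HexW hhex hx le_sup_left
    (sup_le (point_le_HexW hhex hx) hpW) hM2
  exact ⟨hmem, hx, hpiso, fun h => hpx h.symm, x ⊔ p, hmem, le_sup_left, le_sup_right⟩

end Aux4

section Aux5
variable {B : LinearMap.BilinForm F V} {𝓛 : Set (Submodule F V)}

theorem IsIsoPoint.totIso {p : Submodule F V} (hp : IsIsoPoint B p) : TotIso B p := by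
  obtain ⟨v, hv0, hsp⟩ := point_exists_span hp.1
  intro u hu w hw
  rw [hsp] at hu hw
  rcases Submodule.mem_span_singleton.1 hu with ⟨a, rfl⟩
  rcases Submodule.mem_span_singleton.1 hw with ⟨b, rfl⟩
  have := hp.2 v (by rw [hsp]; exact Submodule.mem_span_singleton_self v)
  simp [this]

theorem totIso_finrank_le (hnd : B.Nondegenerate) (hrefl : B.IsRefl)
    (hdim : finrank F V ≤ 7) {U : Submodule F V} (hU : TotIso B U) :
    finrank F U ≤ 3 := by
  have hle : U ≤ B.orthogonal U := fun m hm =>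
    (LinearMap.BilinForm.mem_orthogonal_iff).2 fun n hn => hU n hn m hm
  have h1 := LinearMap.BilinForm.finrank_orthogonal hnd U
  have h2 : finrank F U ≤ finrank F (B.orthogonal U) := Submodule.finrank_mono hle
  have h3 : finrank F U ≤ finrank F V := Submodule.finrank_le U
  omega

theorem sup_point_finrank {M p : Submodule F V} (hp : finrank F p = 1) (h : ¬ p ≤ M) :
    finrank F (M ⊔ p : Submodule F V) = finrank F M + 1 := by
  have hinf : M ⊓ p = ⊥ := by
    rcases Nat.lt_or_ge (finrank F (M ⊓ p : Submodule F V)) 1 with hh | hh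
    · rw [← Submodule.finrank_eq_zero (S := M ⊓ p)]; omega
    · exfalso
      have : M ⊓ p = p := Submodule.eq_of_le_of_finrank_le inf_le_right (by omega)
      exact h (by rw [← this]; exact inf_le_left)
  have := Submodule.finrank_sup_add_finrank_inf_eq M p
  rw [hinf, finrank_bot, hp] at this
  omega

/-- If a point is perpendicular to all of W(x), it is equal or adjacent to x. -/
theorem perp_HexW_cases (hnd : B.Nondegenerate) (hrefl : B.IsRefl)
    (hdim : finrank F V ≤ 7) (hhex : IsHexagonEmbedding B 𝓛) {x p : Submodule F V}
    (hx : IsIsoPoint B x) (hp : IsIsoPoint B p) (hperp : Perp B p (HexW 𝓛 x)) :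
    p = x ∨ HexAdj B 𝓛 p x := by
  have hpx : Perp B p x := hperp.mono le_rfl (point_le_HexW hhex hx)
  have hdle : HexDle2 B 𝓛 p x := dle2_of_perp hhex hp hx hpx
  by_cases heq : p = x
  · exact Or.inl heq
  by_cases hadj : HexAdj B 𝓛 p x
  · exact Or.inr hadj
  exfalso
  obtain ⟨c, ⟨hc1, hc2⟩, hcu⟩ := hhex.unique_mid p x hp hx heq hadj hdle
  have hciso : IsIsoPoint B c := hc1.2.1
  have hcW : c ≤ HexW 𝓛 x := by
    obtain ⟨_, _, _, L, hL, h1, h2⟩ := hc2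
    exact h1.trans (line_le_HexW hL h2)
  have hcx : c ≠ x := hc2.2.2.1
  have hW3 : finrank F (HexW 𝓛 x) = 3 := hhex.w_plane x hx
  have hcx2 : finrank F (c ⊔ x : Submodule F V) = 2 := point_sup_finrank hciso.1 hx.1 hcx
  have hlt : c ⊔ x < HexW 𝓛 x := by
    apply lt_of_le_of_ne (sup_le hcW (point_le_HexW hhex hx))
    intro h
    rw [h, hW3] at hcx2
    omega
  obtain ⟨v, hvW, hvcx⟩ := SetLike.exists_of_lt hlt
  have hv0 : v ≠ 0 := fun h => hvcx (h ▸ Submodule.zero_mem _)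
  set y := Submodule.span F {v} with hy
  have hyW : y ≤ HexW 𝓛 x := Submodule.span_le.2 (Set.singleton_subset_iff.2 hvW)
  have hy1 : finrank F y = 1 := finrank_span_singleton hv0
  have hyiso : IsIsoPoint B y := isoPoint_of_le_totIso (HexW_totIso hhex hx) hyW hy1
  have hynle : ¬ y ≤ c ⊔ x := fun h => hvcx (h (Submodule.mem_span_singleton_self v))
  have hyx : y ≠ x := fun h => hynle (h ▸ le_sup_right)
  have hyc : y ≠ c := fun h => hynle (h ▸ le_sup_left)
  have hadjxy : HexAdj B 𝓛 x y := by
    rcases point_of_HexW hhex hx hyW hy1 with h | h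
    · exact absurd h hyx
    · exact h.2
  have hpnW : ¬ p ≤ HexW 𝓛 x := by
    intro h
    rcases point_of_HexW hhex hx h hp.1 with h' | h'
    · exact heq h'
    · exact hadj h'.2.symm'
  have hpy : p ≠ y := fun h => hpnW (h ▸ hyW)
  have hperpy : Perp B p y := hperp.mono le_rfl hyW
  have hadjpy : ¬ HexAdj B 𝓛 p y := by
    intro h
    exact hyc (hcu y ⟨h, hadjxy.symm'⟩)
  obtain ⟨w, ⟨hw1, hw2⟩, _⟩ := hhex.unique_mid p y hp hyiso hpy hadjpy
    (dle2_of_perp hhex hp hyiso hperpy)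
  have hwiso : IsIsoPoint B w := hw1.2.1
  -- build the totally isotropic space
  have hWiso : TotIso B (HexW 𝓛 x) := HexW_totIso hhex hx
  have pcx : Perp B c x := hc2.perp hhex
  have pcy : Perp B c y := hWiso.mono hcW hyW
  have pcw : Perp B c w := perp_of_dle2 hhex hciso hwiso
    (dle2_of_adj_adj hc1.symm' hw1)
  have pxy : Perp B x y := hWiso.mono (point_le_HexW hhex hx) hyW
  have pxw : Perp B x w := perp_of_dle2 hhex hx hwiso
    (dle2_of_adj_adj hadjxy hw2.symm')
  have pyw : Perp B y w := (hw2.perp hhex).symm hrefl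
  have ppc : Perp B p c := hc1.perp hhex
  have ppw : Perp B p w := hw1.perp hhex
  have hU : TotIso B (((c ⊔ x) ⊔ y) ⊔ (p ⊔ w)) := by
    have t1 : TotIso B (c ⊔ x) := hciso.totIso.sup hx.totIso pcx (pcx.symm hrefl)
    have t2 : TotIso B ((c ⊔ x) ⊔ y) := t1.sup hyiso.totIso
      (Perp.sup_left pcy pxy) ((Perp.sup_left pcy pxy).symm hrefl)
    have t3 : TotIso B (p ⊔ w) := hp.totIso.sup hwiso.totIso ppw (ppw.symm hrefl)
    refine t2.sup t3 ?_ ?_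
    · have h1 : Perp B ((c ⊔ x) ⊔ y) p :=
        Perp.sup_left (Perp.sup_left (ppc.symm hrefl) (hpx.symm hrefl)) ((hperpy).symm hrefl)
      have h2 : Perp B ((c ⊔ x) ⊔ y) w :=
        Perp.sup_left (Perp.sup_left pcw pxw) pyw
      exact h1.sup_right h2
    · have h1 : Perp B ((c ⊔ x) ⊔ y) p :=
        Perp.sup_left (Perp.sup_left (ppc.symm hrefl) (hpx.symm hrefl)) ((hperpy).symm hrefl)
      have h2 : Perp B ((c ⊔ x) ⊔ y) w :=
        Perp.sup_left (Perp.sup_left pcw pxw) pyw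
      exact (h1.sup_right h2).symm hrefl
  have hle3 := totIso_finrank_le hnd hrefl hdim hU
  -- dimension count: (c ⊔ x) ⊔ y = W x, and p is outside
  have hcxy : (c ⊔ x) ⊔ y = HexW 𝓛 x := by
    apply Submodule.eq_of_le_of_finrank_le (sup_le (sup_le hcW (point_le_HexW hhex hx)) hyW)
    rw [hW3, sup_point_finrank hy1 hynle, hcx2]
  have h4 : finrank F ((HexW 𝓛 x) ⊔ p : Submodule F V) = 4 := by
    rw [sup_point_finrank hp.1 hpnW, hW3]
  have hle : (HexW 𝓛 x) ⊔ p ≤ ((c ⊔ x) ⊔ y) ⊔ (p ⊔ w) := by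
    rw [← hcxy]
    exact sup_le le_sup_left (le_sup_left.trans le_sup_right)
  have := Submodule.finrank_mono hle
  omega

end Aux5

/-- `Q`-side plane piece: `b^⊥ ∩ W(a)` -/
def hexQ (B : LinearMap.BilinForm F V) (𝓛 : Set (Submodule F V)) (a b : Submodule F V) :
    Submodule F V := B.orthogonal b ⊓ HexW 𝓛 a

/-- the plane `E = ⟨b, b^⊥ ∩ W(a)⟩`; the plane `F` of the theorem is `hexE b a`. -/
def hexE (B : LinearMap.BilinForm F V) (𝓛 : Set (Submodule F V)) (a b : Submodule F V) :
    Submodule F V := b ⊔ hexQ B 𝓛 a b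

section Aux6
variable {B : LinearMap.BilinForm F V} {𝓛 : Set (Submodule F V)}

theorem perp_of_mem_orthogonal {N M : Submodule F V} (h : M ≤ B.orthogonal N) :
    Perp B N M := fun u hu v hv => (LinearMap.BilinForm.mem_orthogonal_iff.1 (h hv)) u hu

theorem le_orthogonal_of_perp {N M : Submodule F V} (h : Perp B N M) :
    M ≤ B.orthogonal N := fun v hv =>
  LinearMap.BilinForm.mem_orthogonal_iff.2 fun u hu => h u hu v hv

variable (hnd : B.Nondegenerate) (hrefl : B.IsRefl) (hdim : finrank F V ≤ 7)
  (hhex : IsHexagonEmbedding B 𝓛)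
variable {a b : Submodule F V} (ha : IsIsoPoint B a) (hb : IsIsoPoint B b)
  (hopp : ¬ HexDle2 B 𝓛 a b)

include hhex ha hb hopp

theorem opp_not_perp : ¬ Perp B a b := fun h => hopp (dle2_of_perp hhex ha hb h)

theorem opp_ne : a ≠ b := fun h => hopp (Or.inl h)

theorem opp_not_adj : ¬ HexAdj B 𝓛 a b := fun h => hopp h.dle2

theorem opp_point_W : ∀ p : Submodule F V, finrank F p = 1 → p ≤ HexW 𝓛 a →
    ¬ p ≤ HexW 𝓛 b := by
  intro p hp hpa hpb
  rcases point_of_HexW hhex ha hpa hp with h1 | h1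
  · subst h1
    rcases point_of_HexW hhex hb hpb hp with h2 | h2
    · exact hopp (Or.inl h2)
    · exact hopp h2.2.symm'.dle2
  · rcases point_of_HexW hhex hb hpb hp with h2 | h2
    · rw [h2] at h1
      exact hopp h1.2.dle2
    · exact hopp (dle2_of_adj_adj h1.2 h2.2.symm')

theorem opp_W_inf_W : HexW 𝓛 a ⊓ HexW 𝓛 b = ⊥ := by
  rw [eq_bot_iff]
  intro v hv
  by_contra hv0
  have hv0 : v ≠ 0 := fun h => hv0 (h ▸ Submodule.zero_mem ⊥)
  exact (opp_point_W hhex ha hb hopp (Submodule.span F {v}) (finrank_span_singleton hv0)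
    (Submodule.span_le.2 (Set.singleton_subset_iff.2 hv.1)))
    (Submodule.span_le.2 (Set.singleton_subset_iff.2 hv.2))

theorem opp_b_not_le_Wa : ¬ b ≤ HexW 𝓛 a := by
  intro h
  rcases point_of_HexW hhex ha h hb.1 with h1 | h1
  · exact hopp (Or.inl h1.symm)
  · exact hopp h1.2.dle2

include hnd hrefl in
theorem hexQ_finrank : finrank F (hexQ B 𝓛 a b) = 2 := by
  have horth : finrank F (B.orthogonal b) = finrank F V - 1 := by
    rw [LinearMap.BilinForm.finrank_orthogonal hnd, hb.1]
  have hW3 : finrank F (HexW 𝓛 a) = 3 := hhex.w_plane a ha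
  have hsup : finrank F (B.orthogonal b ⊔ HexW 𝓛 a : Submodule F V) ≤ finrank F V :=
    Submodule.finrank_le _
  have hVge : 1 ≤ finrank F V := by
    have h1 := Submodule.finrank_le b
    have h2 := hb.1
    omega
  have hge : 2 ≤ finrank F (hexQ B 𝓛 a b) := by
    have := Submodule.finrank_sup_add_finrank_inf_eq (B.orthogonal b) (HexW 𝓛 a)
    rw [horth, hW3] at this
    unfold hexQ
    omega
  rcases Nat.lt_or_ge (finrank F (hexQ B 𝓛 a b)) 3 with h | h
  · omega
  exfalso
  have heq : hexQ B 𝓛 a b = HexW 𝓛 a :=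
    Submodule.eq_of_le_of_finrank_le inf_le_right (by omega)
  have haQ : a ≤ B.orthogonal b := by
    have h1 : a ≤ hexQ B 𝓛 a b := by rw [heq]; exact point_le_HexW hhex ha
    exact h1.trans inf_le_left
  exact opp_not_perp hhex ha hb hopp ((perp_of_mem_orthogonal haQ).symm hrefl)

include hrefl in
theorem opp_a_not_le_orth : ¬ a ≤ B.orthogonal b := fun h =>
  opp_not_perp hhex ha hb hopp ((perp_of_mem_orthogonal h).symm hrefl)

include hnd hrefl in
theorem hexW_eq_sup_Q : HexW 𝓛 a = hexQ B 𝓛 a b ⊔ a := by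
  have h1 : ¬ a ≤ hexQ B 𝓛 a b := fun h =>
    opp_a_not_le_orth hrefl hhex ha hb hopp (h.trans inf_le_left)
  have h2 : hexQ B 𝓛 a b ⊔ a ≤ HexW 𝓛 a := sup_le inf_le_right (point_le_HexW hhex ha)
  exact (Submodule.eq_of_le_of_finrank_le h2 (by
    rw [hhex.w_plane a ha, sup_point_finrank ha.1 h1,
      hexQ_finrank hnd hrefl hhex ha hb hopp])).symm

theorem opp_b_not_le_Q : ¬ b ≤ hexQ B 𝓛 a b := fun h =>
  opp_b_not_le_Wa hhex ha hb hopp (h.trans inf_le_right)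

include hnd hrefl in
theorem hexE_finrank : finrank F (hexE B 𝓛 a b) = 3 := by
  rw [hexE, sup_comm, sup_point_finrank hb.1 (opp_b_not_le_Q hhex ha hb hopp),
    hexQ_finrank hnd hrefl hhex ha hb hopp]

include hrefl in
theorem hexE_totIso : TotIso B (hexE B 𝓛 a b) := by
  have hQ : TotIso B (hexQ B 𝓛 a b) :=
    (HexW_totIso hhex ha).mono inf_le_right inf_le_right
  have hbQ : Perp B b (hexQ B 𝓛 a b) := perp_of_mem_orthogonal inf_le_left
  exact hb.totIso.sup hQ hbQ (hbQ.symm hrefl)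

include hnd hrefl hdim in
theorem hexE_sup_hexE : hexE B 𝓛 a b ⊔ hexE B 𝓛 b a = HexW 𝓛 a ⊔ HexW 𝓛 b := by
  have h1 := hexW_eq_sup_Q hnd hrefl hhex ha hb hopp
  have h2 := hexW_eq_sup_Q hnd hrefl hhex hb ha (fun h => hopp h.symm')
  rw [hexE, hexE, h1, h2]
  apply le_antisymm
  · exact sup_le (sup_le (le_sup_right.trans le_sup_right) (le_sup_left.trans le_sup_left))
      (sup_le (le_sup_right.trans le_sup_left) (le_sup_left.trans le_sup_right))
  · exact sup_le (sup_le (le_sup_right.trans le_sup_left) (le_sup_left.trans le_sup_right))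
      (sup_le (le_sup_right.trans le_sup_right) (le_sup_left.trans le_sup_left))

include hnd hrefl hdim in
theorem hexE_inf_hexE : hexE B 𝓛 a b ⊓ hexE B 𝓛 b a = ⊥ := by
  have hsup := hexE_sup_hexE hnd hrefl hdim hhex ha hb hopp
  have h6 : finrank F (HexW 𝓛 a ⊔ HexW 𝓛 b : Submodule F V) = 6 := by
    have := Submodule.finrank_sup_add_finrank_inf_eq (HexW 𝓛 a) (HexW 𝓛 b)
    rw [opp_W_inf_W hhex ha hb hopp, finrank_bot, hhex.w_plane a ha, hhex.w_plane b hb] at this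
    omega
  have := Submodule.finrank_sup_add_finrank_inf_eq (hexE B 𝓛 a b) (hexE B 𝓛 b a)
  rw [hsup, h6, hexE_finrank hnd hrefl hhex ha hb hopp,
    hexE_finrank hnd hrefl hhex hb ha (fun h => hopp h.symm')] at this
  rw [← Submodule.finrank_eq_zero (S := hexE B 𝓛 a b ⊓ hexE B 𝓛 b a)]
  omega

end Aux6

section Aux7
variable {B : LinearMap.BilinForm F V} {𝓛 : Set (Submodule F V)}
variable (hnd : B.Nondegenerate) (hrefl : B.IsRefl) (hdim : finrank F V ≤ 7)
  (hhex : IsHexagonEmbedding B 𝓛)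
variable {a b : Submodule F V} (ha : IsIsoPoint B a) (hb : IsIsoPoint B b)
  (hopp : ¬ HexDle2 B 𝓛 a b)

include hnd hrefl hdim hhex ha hb hopp in
theorem hex_mid_lemma {u : V} (hu : u ∈ hexQ B 𝓛 a b) (hu0 : u ≠ 0) :
    ∃ m : Submodule F V, finrank F m = 1 ∧ m ≤ hexQ B 𝓛 b a ∧
      HexAdj B 𝓛 (Submodule.span F {u}) m ∧ HexAdj B 𝓛 m b ∧
      Submodule.span F {u} ⊔ b ≤ HexW 𝓛 m ∧
      (∀ f : Submodule F V, finrank F f = 1 → f ≤ hexQ B 𝓛 b a →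
        Perp B (Submodule.span F {u}) f → f = m) := by
  set spu := Submodule.span F {u} with hspu
  have hspu1 : finrank F spu = 1 := finrank_span_singleton hu0
  have hspuWa : spu ≤ HexW 𝓛 a := Submodule.span_le.2 (Set.singleton_subset_iff.2 hu.2)
  have hspuOrth : spu ≤ B.orthogonal b := Submodule.span_le.2 (Set.singleton_subset_iff.2 hu.1)
  have hspuiso : IsIsoPoint B spu := isoPoint_of_le_totIso (HexW_totIso hhex ha) hspuWa hspu1
  have hspune_a : spu ≠ a := fun h =>
    opp_a_not_le_orth hrefl hhex ha hb hopp (h ▸ hspuOrth)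
  have hAdja : HexAdj B 𝓛 a spu := by
    rcases point_of_HexW hhex ha hspuWa hspu1 with h | h
    · exact absurd h hspune_a
    · exact h.2
  have hPbs : Perp B b spu := perp_of_mem_orthogonal hspuOrth
  have hPsb : Perp B spu b := hPbs.symm hrefl
  have hspune_b : spu ≠ b := fun h => opp_b_not_le_Wa hhex ha hb hopp (h ▸ hspuWa)
  have hnadj : ¬ HexAdj B 𝓛 spu b := fun h => hopp (dle2_of_adj_adj hAdja h)
  obtain ⟨m, ⟨hm1, hm2⟩, hmu⟩ := hhex.unique_mid spu b hspuiso hb hspune_b hnadj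
    (dle2_of_perp hhex hspuiso hb hPsb)
  have hmiso : IsIsoPoint B m := hm1.2.1
  have hmWb : m ≤ HexW 𝓛 b := by
    obtain ⟨_, _, _, L, hL, h1, h2⟩ := hm2
    exact h1.trans (line_le_HexW hL h2)
  have hPam : Perp B a m := perp_of_dle2 hhex ha hmiso (dle2_of_adj_adj hAdja hm1)
  have hmQ : m ≤ hexQ B 𝓛 b a := le_inf (le_orthogonal_of_perp hPam) hmWb
  have hL1 : spu ⊔ m ∈ 𝓛 := hm1.sup_mem hhex
  have hL2 : m ⊔ b ∈ 𝓛 := hm2.sup_mem hhex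
  have hWm : spu ⊔ b ≤ HexW 𝓛 m :=
    sup_le (le_sup_left.trans (line_le_HexW hL1 le_sup_right))
      (le_sup_right.trans (line_le_HexW hL2 le_sup_left))
  refine ⟨m, hmiso.1, hmQ, hm1, hm2, hWm, ?_⟩
  intro f hf1 hfQ hperpf
  have hopp' : ¬ HexDle2 B 𝓛 b a := fun h => hopp h.symm'
  have hnp : ¬ Perp B spu (hexQ B 𝓛 b a) := by
    intro hp
    have hWba : HexW 𝓛 b = hexQ B 𝓛 b a ⊔ b := hexW_eq_sup_Q hnd hrefl hhex hb ha hopp'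
    have hPW : Perp B spu (HexW 𝓛 b) := by
      rw [hWba]; exact hp.sup_right hPsb
    rcases perp_HexW_cases hnd hrefl hdim hhex hb hspuiso hPW with h | h
    · exact hspune_b h
    · exact hnadj h
  have hK1 : finrank F (B.orthogonal spu ⊓ hexQ B 𝓛 b a : Submodule F V) = 1 := by
    have horth : finrank F (B.orthogonal spu) = finrank F V - 1 := by
      rw [LinearMap.BilinForm.finrank_orthogonal hnd, hspu1]
    have hQ2 : finrank F (hexQ B 𝓛 b a) = 2 := hexQ_finrank hnd hrefl hhex hb ha hopp'
    have hsup : finrank F (B.orthogonal spu ⊔ hexQ B 𝓛 b a : Submodule F V) ≤ finrank F V :=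
      Submodule.finrank_le _
    have hVge : 1 ≤ finrank F V := by
      have h1 := Submodule.finrank_le b
      have h2 := hb.1
      omega
    have heq := Submodule.finrank_sup_add_finrank_inf_eq (B.orthogonal spu) (hexQ B 𝓛 b a)
    rw [horth, hQ2] at heq
    rcases Nat.lt_or_ge (finrank F (B.orthogonal spu ⊓ hexQ B 𝓛 b a : Submodule F V)) 2
      with h | h
    · omega
    exfalso
    have : B.orthogonal spu ⊓ hexQ B 𝓛 b a = hexQ B 𝓛 b a :=
      Submodule.eq_of_le_of_finrank_le inf_le_right (by omega)
    apply hnp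
    apply perp_of_mem_orthogonal
    rw [← this]
    exact le_inf inf_le_left inf_le_right |>.trans inf_le_left
  have hmK : m ≤ B.orthogonal spu ⊓ hexQ B 𝓛 b a :=
    le_inf (le_orthogonal_of_perp (hm1.perp hhex)) hmQ
  have hfK : f ≤ B.orthogonal spu ⊓ hexQ B 𝓛 b a :=
    le_inf (le_orthogonal_of_perp hperpf) hfQ
  have hfe : f = B.orthogonal spu ⊓ hexQ B 𝓛 b a :=
    Submodule.eq_of_le_of_finrank_le hfK (by rw [hK1, hf1])
  have hme : m = B.orthogonal spu ⊓ hexQ B 𝓛 b a :=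
    Submodule.eq_of_le_of_finrank_le hmK (by rw [hK1, hmiso.1])
  rw [hfe, hme]

end Aux7

section Aux8
variable {B : LinearMap.BilinForm F V} {𝓛 : Set (Submodule F V)}

theorem perp_span_singleton {u w : V} (h : B u w = 0) :
    Perp B (Submodule.span F {u}) (Submodule.span F {w}) :=
  perp_span_span (fun x hx y hy => by
    rw [Set.mem_singleton_iff] at hx hy; rw [hx, hy]; exact h)

variable (hnd : B.Nondegenerate) (hrefl : B.IsRefl) (hdim : finrank F V ≤ 7)
  (hhex : IsHexagonEmbedding B 𝓛)
variable {a b : Submodule F V} (ha : IsIsoPoint B a) (hb : IsIsoPoint B b)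
  (hopp : ¬ HexDle2 B 𝓛 a b)

include hnd hrefl hdim hhex ha hb hopp in
theorem hex_main_adj {e f : Submodule F V} (he : finrank F e = 1) (heE : e ≤ hexE B 𝓛 a b)
    (hf : finrank F f = 1) (hfF : f ≤ hexE B 𝓛 b a) (hperp : Perp B e f) :
    HexAdj B 𝓛 e f := by
  have hopp' : ¬ HexDle2 B 𝓛 b a := fun h => hopp h.symm'
  have hEiso : TotIso B (hexE B 𝓛 a b) := hexE_totIso hrefl hhex ha hb hopp
  have hFiso : TotIso B (hexE B 𝓛 b a) := hexE_totIso hrefl hhex hb ha hopp'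
  have heiso : IsIsoPoint B e := isoPoint_of_le_totIso hEiso heE he
  have hfiso : IsIsoPoint B f := isoPoint_of_le_totIso hFiso hfF hf
  have hEF : hexE B 𝓛 a b ⊓ hexE B 𝓛 b a = ⊥ := hexE_inf_hexE hnd hrefl hdim hhex ha hb hopp
  have ne_of_EF : ∀ p q : Submodule F V, finrank F p = 1 → p ≤ hexE B 𝓛 a b →
      q ≤ hexE B 𝓛 b a → p ≠ q := by
    intro p q hp hpE hqF hpq
    have : p ≤ ⊥ := hEF ▸ le_inf hpE (hpq ▸ hqF)
    rw [le_bot_iff] at this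
    rw [this, finrank_bot] at hp
    omega
  have hef : e ≠ f := ne_of_EF e f he heE hfF
  -- decompose e and f
  obtain ⟨v, hv0, hve⟩ := point_exists_span he
  have hvmem : v ∈ e := by rw [hve]; exact Submodule.mem_span_singleton_self v
  obtain ⟨s, hs, t, ht, hst⟩ := Submodule.mem_sup.1 (heE hvmem)
  obtain ⟨w, hw0, hwf⟩ := point_exists_span hf
  have hwmem : w ∈ f := by rw [hwf]; exact Submodule.mem_span_singleton_self w
  obtain ⟨s', hs', t', ht', hst'⟩ := Submodule.mem_sup.1 (hfF hwmem)
  -- basic perp facts about W(a), W(b)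
  have hWaiso : TotIso B (HexW 𝓛 a) := HexW_totIso hhex ha
  have hWbiso : TotIso B (HexW 𝓛 b) := HexW_totIso hhex hb
  have htWa : t ∈ HexW 𝓛 a := ht.2
  have ht'Wb : t' ∈ HexW 𝓛 b := ht'.2
  have hbWb : b ≤ HexW 𝓛 b := point_le_HexW hhex hb
  have haWa : a ≤ HexW 𝓛 a := point_le_HexW hhex ha
  -- CASE 1 : t = 0, i.e. e = b
  by_cases ht0 : t = 0
  · have heb : e = b := by
      have hvb : v ∈ b := by rw [← hst, ht0, add_zero]; exact hs
      have h1 : e ≤ b := point_le_of_mem he hvmem hv0 hvb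
      exact Submodule.eq_of_le_of_finrank_le h1 (by rw [hb.1, he])
    -- show s' = 0
    have hs'0 : s' = 0 := by
      by_contra hs'0
      apply opp_not_perp hhex ha hb hopp
      apply Perp.symm hrefl
      have haeq : a = Submodule.span F {s'} := point_eq_span ha.1 hs' hs'0
      rw [haeq]
      intro x hx y hy
      rcases Submodule.mem_span_singleton.1 hy with ⟨c, rfl⟩
      have hxb : x ∈ b := heb ▸ hx
      have h1 : B x w = 0 := hperp x (heb ▸ hx : x ∈ e) w hwmem
      have h2 : B x t' = 0 := hWbiso x (hbWb hxb) t' ht'Wb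
      have h3 : B x s' = 0 := by
        rw [← hst', map_add, h2, add_zero] at h1
        exact h1
      rw [map_smul, smul_eq_mul, h3, mul_zero]
    have hwQ : w ∈ hexQ B 𝓛 b a := by rw [← hst', hs'0, zero_add]; exact ht'
    have hfQ : f ≤ hexQ B 𝓛 b a := point_le_of_mem hf hwmem hw0 hwQ
    have hfWb : f ≤ HexW 𝓛 b := hfQ.trans inf_le_right
    rcases point_of_HexW hhex hb hfWb hf with h | h
    · exfalso
      apply opp_not_perp hhex ha hb hopp
      exact perp_of_mem_orthogonal (h ▸ hfQ.trans inf_le_left : b ≤ B.orthogonal a)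
    · rw [heb]; exact h.2
  -- now t ≠ 0; get the middle point m for t
  have htQ : t ∈ hexQ B 𝓛 a b := ht
  obtain ⟨m, hm1, hmQ, hmAdjU, hmAdjB, hmW, hmu⟩ :=
    hex_mid_lemma hnd hrefl hdim hhex ha hb hopp htQ ht0
  have hmiso : IsIsoPoint B m := hmAdjU.2.1
  have hmF : m ≤ hexE B 𝓛 b a := hmQ.trans le_sup_right
  have heW : e ≤ Submodule.span F {t} ⊔ b := by
    apply point_le_of_mem he hvmem hv0
    exact Submodule.mem_sup.2 ⟨t, Submodule.mem_span_singleton_self t, s, hs, by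
      rw [← hst]; exact add_comm t s⟩
  have hAdjme : HexAdj B 𝓛 m e := by
    rcases point_of_HexW hhex hmiso (heW.trans hmW) he with h | h
    · exact absurd h (ne_of_EF e m he heE hmF)
    · exact h.2
  -- CASE 2 : t' = 0, i.e. f = a
  by_cases ht'0 : t' = 0
  · have hfa : f = a := by
      have hwa : w ∈ a := by rw [← hst', ht'0, add_zero]; exact hs'
      have h1 : f ≤ a := point_le_of_mem hf hwmem hw0 hwa
      exact Submodule.eq_of_le_of_finrank_le h1 (by rw [ha.1, hf])
    -- show s = 0
    have hs0 : s = 0 := by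
      by_contra hs0
      apply opp_not_perp hhex ha hb hopp
      apply Perp.symm hrefl
      have hbeq : b = Submodule.span F {s} := point_eq_span hb.1 hs hs0
      rw [hbeq]
      intro x hx y hy
      rcases Submodule.mem_span_singleton.1 hx with ⟨c, rfl⟩
      have h1 : B v y = 0 := hperp v hvmem y (hfa ▸ hy : y ∈ f)
      have h2 : B t y = 0 := hWaiso t htWa y (haWa hy)
      have h3 : B s y = 0 := by
        rw [← hst, map_add, LinearMap.add_apply, h2, add_zero] at h1
        exact h1
      rw [map_smul, LinearMap.smul_apply, smul_eq_mul, h3, mul_zero]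
    have hvQ : v ∈ hexQ B 𝓛 a b := by rw [← hst, hs0, zero_add]; exact ht
    have heQ : e ≤ hexQ B 𝓛 a b := point_le_of_mem he hvmem hv0 hvQ
    have heWa : e ≤ HexW 𝓛 a := heQ.trans inf_le_right
    rcases point_of_HexW hhex ha heWa he with h | h
    · exfalso
      exact opp_a_not_le_orth hrefl hhex ha hb hopp (h ▸ heQ.trans inf_le_left)
    · rw [hfa]; exact h.2.symm'
  -- t' ≠ 0
  have ht'Q : t' ∈ hexQ B 𝓛 b a := ht'
  -- CASE 3 : s' = 0, i.e. f = span t' ≤ P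
  by_cases hs'0 : s' = 0
  · have hfsp : f = Submodule.span F {t'} := by
      have hwt' : w = t' := by rw [← hst', hs'0, zero_add]
      rw [hwf, hwt']
    have hBtt' : B t t' = 0 := by
      have h1 : B v w = 0 := hperp v hvmem w hwmem
      have h2 : B s w = 0 := by
        have hwWb : w ∈ HexW 𝓛 b := by
          rw [← hst', hs'0, zero_add]; exact ht'Wb
        exact hWbiso s (hbWb hs) w hwWb
      have h3 : B t w = 0 := by
        rw [← hst, map_add, LinearMap.add_apply, h2, zero_add] at h1
        exact h1
      rw [← hst', hs'0, zero_add] at h3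
      exact h3
    have hfm : f = m := by
      have hfle : f ≤ hexQ B 𝓛 b a := by
        rw [hfsp]
        exact Submodule.span_le.2 (Set.singleton_subset_iff.2 ht'Q)
      apply hmu f hf hfle
      rw [hfsp]
      exact perp_span_singleton hBtt'
    rw [hfm]
    exact hAdjme.symm'
  -- CASE 4 : f generic; get the middle point m' for t'
  obtain ⟨m', hm'1, hm'Q, hm'AdjU, hm'AdjA, hm'W, hm'u⟩ :=
    hex_mid_lemma hnd hrefl hdim hhex hb ha hopp' ht'Q ht'0
  have hm'iso : IsIsoPoint B m' := hm'AdjU.2.1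
  have hm'E : m' ≤ hexE B 𝓛 a b := hm'Q.trans le_sup_right
  have hfW' : f ≤ Submodule.span F {t'} ⊔ a := by
    apply point_le_of_mem hf hwmem hw0
    exact Submodule.mem_sup.2 ⟨t', Submodule.mem_span_singleton_self t', s', hs', by
      rw [← hst']; exact add_comm t' s'⟩
  have hAdjm'f : HexAdj B 𝓛 m' f := by
    rcases point_of_HexW hhex hm'iso (hfW'.trans hm'W) hf with h | h
    · exact absurd h.symm (ne_of_EF m' f hm'1 hm'E hfF)
    · exact h.2
  -- CASE 4a : s = 0, i.e. e = span t
  by_cases hs0 : s = 0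
  · have hvt : v = t := by rw [← hst, hs0, zero_add]
    have heeq : e = Submodule.span F {t} := by rw [hve, hvt]
    have hBtt' : B t t' = 0 := by
      have h1 : B v w = 0 := hperp v hvmem w hwmem
      have h2 : B t s' = 0 := hWaiso t htWa s' (haWa hs')
      rw [hvt, ← hst', map_add, h2, zero_add] at h1
      exact h1
    have heQ : e ≤ hexQ B 𝓛 a b := point_le_of_mem he hvmem hv0 (by
      rw [hvt]; exact htQ)
    have heqm' : e = m' := by
      apply hm'u e he heQ
      rw [heeq]
      exact perp_span_singleton (hrefl t t' hBtt')
    rw [heqm']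
    exact hAdjm'f
  -- CASE 4b : fully generic
  have hem' : e ≠ m' := by
    intro h
    have heQ : e ≤ hexQ B 𝓛 a b := h ▸ hm'Q
    have hvWa : v ∈ HexW 𝓛 a := (heQ.trans inf_le_right) hvmem
    have hsWa : s ∈ HexW 𝓛 a := by
      have hseq : s = v - t := by rw [← hst]; abel
      rw [hseq]
      exact Submodule.sub_mem _ hvWa htWa
    apply opp_b_not_le_Wa hhex ha hb hopp
    rw [point_eq_span hb.1 hs hs0]
    exact Submodule.span_le.2 (Set.singleton_subset_iff.2 hsWa)
  have hfm : f ≠ m := by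
    intro h
    have hfQ : f ≤ hexQ B 𝓛 b a := h ▸ hmQ
    have hwWb : w ∈ HexW 𝓛 b := (hfQ.trans inf_le_right) hwmem
    have hs'Wb : s' ∈ HexW 𝓛 b := by
      have hseq : s' = w - t' := by rw [← hst']; abel
      rw [hseq]
      exact Submodule.sub_mem _ hwWb ht'Wb
    apply opp_b_not_le_Wa hhex hb ha hopp'
    rw [point_eq_span ha.1 hs' hs'0]
    exact Submodule.span_le.2 (Set.singleton_subset_iff.2 hs'Wb)
  by_contra hnadj
  obtain ⟨z, ⟨hz1, hz2⟩, _⟩ := hhex.unique_mid e f heiso hfiso hef hnadj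
    (dle2_of_perp hhex heiso hfiso hperp)
  have hziso : IsIsoPoint B z := hz1.2.1
  -- perpendicularity facts
  have pef : Perp B e f := hperp
  have pfe : Perp B f e := hperp.symm hrefl
  have pme : Perp B m e := hAdjme.perp hhex
  have pem : Perp B e m := pme.symm hrefl
  have pfm : Perp B f m := hFiso.mono hfF hmF
  have pmf : Perp B m f := pfm.symm hrefl
  have pez : Perp B e z := hz1.perp hhex
  have pze : Perp B z e := pez.symm hrefl
  have pzf : Perp B z f := hz2.perp hhex
  have pfz : Perp B f z := pzf.symm hrefl
  have pzm : Perp B z m := perp_of_dle2 hhex hziso hmiso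
    (dle2_of_adj_adj hz1.symm' hAdjme.symm')
  have pmz : Perp B m z := pzm.symm hrefl
  have pem' : Perp B e m' := hEiso.mono heE hm'E
  have pm'e : Perp B m' e := pem'.symm hrefl
  have pm'f : Perp B m' f := hAdjm'f.perp hhex
  have pfm' : Perp B f m' := pm'f.symm hrefl
  have pzm' : Perp B z m' := perp_of_dle2 hhex hziso hm'iso
    (dle2_of_adj_adj hz2 hAdjm'f.symm')
  have pm'z : Perp B m' z := pzm'.symm hrefl
  -- the two totally isotropic 3-spaces
  have not_le_F : ∀ p M : Submodule F V, finrank F p = 1 → p ≤ hexE B 𝓛 a b →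
      M ≤ hexE B 𝓛 b a → ¬ p ≤ M := by
    intro p M hp hpE hMF hle
    have h1 : p ≤ ⊥ := hEF ▸ le_inf hpE (hle.trans hMF)
    rw [le_bot_iff] at h1
    rw [h1, finrank_bot] at hp
    omega
  have not_le_E : ∀ p M : Submodule F V, finrank F p = 1 → p ≤ hexE B 𝓛 b a →
      M ≤ hexE B 𝓛 a b → ¬ p ≤ M := by
    intro p M hp hpF hME hle
    have h1 : p ≤ ⊥ := hEF ▸ le_inf (hle.trans hME) hpF
    rw [le_bot_iff] at h1
    rw [h1, finrank_bot] at hp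
    omega
  set X := (f ⊔ m) ⊔ e with hXdef
  set Y := (e ⊔ m') ⊔ f with hYdef
  have hfm2 : finrank F (f ⊔ m : Submodule F V) = 2 := point_sup_finrank hf hm1 hfm
  have henotfm : ¬ e ≤ f ⊔ m := not_le_F e (f ⊔ m) he heE (sup_le hfF hmF)
  have frX : finrank F X = 3 := by
    rw [hXdef, sup_point_finrank he henotfm, hfm2]
  have hem'2 : finrank F (e ⊔ m' : Submodule F V) = 2 := point_sup_finrank he hm'1 hem'
  have hfnotem' : ¬ f ≤ e ⊔ m' := not_le_E f (e ⊔ m') hf hfF (sup_le heE hm'E)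
  have frY : finrank F Y = 3 := by
    rw [hYdef, sup_point_finrank hf hfnotem', hem'2]
  have hXiso : TotIso B X := by
    have t1 : TotIso B (f ⊔ m) := hfiso.totIso.sup hmiso.totIso pfm pmf
    exact t1.sup heiso.totIso (Perp.sup_left pfe pme) (pef.sup_right pem)
  have hYiso : TotIso B Y := by
    have t1 : TotIso B (e ⊔ m') := heiso.totIso.sup hm'iso.totIso pem' pm'e
    exact t1.sup hfiso.totIso (Perp.sup_left pef pm'f) (pfe.sup_right pfm')
  have hzX : z ≤ X := by
    have hXz : TotIso B (X ⊔ z) := hXiso.sup hziso.totIso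
      (Perp.sup_left (Perp.sup_left pfz pmz) pez)
      (Perp.sup_right (Perp.sup_right pzf pzm) pze)
    have h3 := totIso_finrank_le hnd hrefl hdim hXz
    have h4 : X = X ⊔ z := Submodule.eq_of_le_of_finrank_le le_sup_left (by omega)
    rw [h4]
    exact le_sup_right
  have hzY : z ≤ Y := by
    have hYz : TotIso B (Y ⊔ z) := hYiso.sup hziso.totIso
      (Perp.sup_left (Perp.sup_left pez pm'z) pfz)
      (Perp.sup_right (Perp.sup_right pze pzm') pzf)
    have h3 := totIso_finrank_le hnd hrefl hdim hYz
    have h4 : Y = Y ⊔ z := Submodule.eq_of_le_of_finrank_le le_sup_left (by omega)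
    rw [h4]
    exact le_sup_right
  -- m' is not in X
  have hm'X : ¬ m' ≤ X := by
    intro h
    have hXEe : ∀ x, x ∈ X → x ∈ hexE B 𝓛 a b → x ∈ e := by
      intro x hx hxE
      rw [hXdef] at hx
      obtain ⟨g, hg, p, hp, hgp⟩ := Submodule.mem_sup.1 hx
      have hgF : g ∈ hexE B 𝓛 b a := (sup_le hfF hmF) hg
      have hgE : g ∈ hexE B 𝓛 a b := by
        have : g = x - p := by rw [← hgp]; abel
        rw [this]
        exact Submodule.sub_mem _ hxE (heE hp)
      have hg0 : g ∈ (⊥ : Submodule F V) := hEF ▸ Submodule.mem_inf.2 ⟨hgE, hgF⟩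
      rw [Submodule.mem_bot] at hg0
      rw [← hgp, hg0, zero_add]
      exact hp
    have hm'e : m' ≤ e := fun x hx => hXEe x (h hx) (hm'E hx)
    have : m' = e := Submodule.eq_of_le_of_finrank_le hm'e (by rw [he, hm'1])
    exact hem' this.symm
  have fr4 : 4 ≤ finrank F (X ⊔ Y : Submodule F V) := by
    have h1 : finrank F (X ⊔ m' : Submodule F V) = 4 := by
      rw [sup_point_finrank hm'1 hm'X, frX]
    have hle : X ⊔ m' ≤ X ⊔ Y :=
      sup_le le_sup_left ((le_sup_right.trans le_sup_left : m' ≤ Y).trans le_sup_right)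
    have := Submodule.finrank_mono hle
    omega
  have hinfXY : finrank F (X ⊓ Y : Submodule F V) ≤ 2 := by
    have := Submodule.finrank_sup_add_finrank_inf_eq X Y
    omega
  have hef2 : finrank F (e ⊔ f : Submodule F V) = 2 := point_sup_finrank he hf hef
  have hefXY : e ⊔ f ≤ X ⊓ Y :=
    le_inf (sup_le le_sup_right (le_sup_left.trans le_sup_left))
      (sup_le (le_sup_left.trans le_sup_left) le_sup_right)
  have hefeq : e ⊔ f = X ⊓ Y :=
    Submodule.eq_of_le_of_finrank_le hefXY (by omega)
  have hze : z ≤ e ⊔ f := by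
    rw [hefeq]
    exact le_inf hzX hzY
  have hzne : z ≠ e := fun h => hz1.2.2.1 h.symm
  have hzesup : z ⊔ e = e ⊔ f := by
    apply Submodule.eq_of_le_of_finrank_le (sup_le hze le_sup_left)
    rw [point_sup_finrank hziso.1 he hzne, hef2]
  apply absurd _ hnadj
  apply adj_of_sup_mem heiso hfiso hef
  rw [← hzesup, sup_comm]
  exact hz1.sup_mem hhex

end Aux8

section Aux9
variable {B : LinearMap.BilinForm F V} {𝓛 : Set (Submodule F V)}
variable (hnd : B.Nondegenerate) (hrefl : B.IsRefl) (hdim : finrank F V ≤ 7)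
  (hhex : IsHexagonEmbedding B 𝓛)
variable {a b : Submodule F V} (ha : IsIsoPoint B a) (hb : IsIsoPoint B b)
  (hopp : ¬ HexDle2 B 𝓛 a b)

include hnd hrefl hdim hhex ha hb hopp in
theorem hexW_point_of_E {e : Submodule F V} (he : IsIsoPoint B e)
    (heE : e ≤ hexE B 𝓛 a b) :
    HexW 𝓛 e = e ⊔ (B.orthogonal e ⊓ hexE B 𝓛 b a) := by
  have hopp' : ¬ HexDle2 B 𝓛 b a := fun h => hopp h.symm'
  have hEiso : TotIso B (hexE B 𝓛 a b) := hexE_totIso hrefl hhex ha hb hopp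
  have hFiso : TotIso B (hexE B 𝓛 b a) := hexE_totIso hrefl hhex hb ha hopp'
  have hEF : hexE B 𝓛 a b ⊓ hexE B 𝓛 b a = ⊥ := hexE_inf_hexE hnd hrefl hdim hhex ha hb hopp
  have hFr3 : finrank F (hexE B 𝓛 b a) = 3 := hexE_finrank hnd hrefl hhex hb ha hopp'
  set d := B.orthogonal e ⊓ hexE B 𝓛 b a with hddef
  have hnotperp : ¬ Perp B e (hexE B 𝓛 b a) := by
    intro hp
    have hpE : Perp B e (hexE B 𝓛 a b) := fun u hu v hv => hEiso u (heE hu) v hv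
    have hpsup : Perp B e (hexE B 𝓛 a b ⊔ hexE B 𝓛 b a) := hpE.sup_right hp
    rw [hexE_sup_hexE hnd hrefl hdim hhex ha hb hopp] at hpsup
    have hpa : Perp B e (HexW 𝓛 a) := hpsup.mono le_rfl le_sup_left
    have hpb : Perp B e (HexW 𝓛 b) := hpsup.mono le_rfl le_sup_right
    rcases perp_HexW_cases hnd hrefl hdim hhex ha he hpa with h1 | h1 <;>
      rcases perp_HexW_cases hnd hrefl hdim hhex hb he hpb with h2 | h2
    · exact hopp (Or.inl (h1.symm.trans h2))
    · rw [h1] at h2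
      exact hopp h2.dle2
    · rw [h2] at h1
      exact hopp h1.symm'.dle2
    · exact hopp (dle2_of_adj_adj h1.symm' h2)
  have hd2 : finrank F d = 2 := by
    have horth : finrank F (B.orthogonal e) = finrank F V - 1 := by
      rw [LinearMap.BilinForm.finrank_orthogonal hnd, he.1]
    have hsup : finrank F (B.orthogonal e ⊔ hexE B 𝓛 b a : Submodule F V) ≤ finrank F V :=
      Submodule.finrank_le _
    have hVge : 1 ≤ finrank F V := by
      have h1 := Submodule.finrank_le b
      have h2 := hb.1
      omega
    have heq := Submodule.finrank_sup_add_finrank_inf_eq (B.orthogonal e) (hexE B 𝓛 b a)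
    rw [horth, hFr3] at heq
    rcases Nat.lt_or_ge (finrank F d) 2 with h | h
    · exfalso
      rw [hddef] at h
      omega
    rcases Nat.lt_or_ge (finrank F d) 3 with h' | h'
    · omega
    exfalso
    have hde : d = hexE B 𝓛 b a := Submodule.eq_of_le_of_finrank_le inf_le_right (by omega)
    apply hnotperp
    apply perp_of_mem_orthogonal
    rw [← hde]
    exact inf_le_left
  have hdbot : d ≠ ⊥ := by
    intro h
    rw [h, finrank_bot] at hd2
    omega
  obtain ⟨v₁, hv₁d, hv₁0⟩ := Submodule.exists_mem_ne_zero_of_ne_bot hdbot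
  set f₁ := Submodule.span F {v₁} with hf₁def
  have hf₁d : f₁ ≤ d := Submodule.span_le.2 (Set.singleton_subset_iff.2 hv₁d)
  have hf₁1 : finrank F f₁ = 1 := finrank_span_singleton hv₁0
  have hf₁lt : f₁ < d := lt_of_le_of_ne hf₁d (fun h => by rw [h, hd2] at hf₁1; omega)
  obtain ⟨v₂, hv₂d, hv₂f₁⟩ := SetLike.exists_of_lt hf₁lt
  have hv₂0 : v₂ ≠ 0 := fun h => hv₂f₁ (h ▸ Submodule.zero_mem _)
  set f₂ := Submodule.span F {v₂} with hf₂def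
  have hf₂d : f₂ ≤ d := Submodule.span_le.2 (Set.singleton_subset_iff.2 hv₂d)
  have hf₂1 : finrank F f₂ = 1 := finrank_span_singleton hv₂0
  have hne12 : f₁ ≠ f₂ := fun h =>
    hv₂f₁ (h ▸ Submodule.mem_span_singleton_self v₂ : v₂ ∈ f₁)
  have hdeq : f₁ ⊔ f₂ = d :=
    Submodule.eq_of_le_of_finrank_le (sup_le hf₁d hf₂d) (by
      rw [point_sup_finrank hf₁1 hf₂1 hne12, hd2])
  have hadj : ∀ fi : Submodule F V, fi ≤ d → finrank F fi = 1 → fi ≤ HexW 𝓛 e := by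
    intro fi hfid hfi1
    have hfiF : fi ≤ hexE B 𝓛 b a := hfid.trans inf_le_right
    have hperp : Perp B e fi := perp_of_mem_orthogonal (hfid.trans inf_le_left)
    have hA := hex_main_adj hnd hrefl hdim hhex ha hb hopp he.1 heE hfi1 hfiF hperp
    have hline : e ⊔ fi ∈ 𝓛 := hA.sup_mem hhex
    exact le_sup_right.trans (line_le_HexW hline le_sup_left)
  have hdW : d ≤ HexW 𝓛 e := by
    rw [← hdeq]
    exact sup_le (hadj f₁ hf₁d hf₁1) (hadj f₂ hf₂d hf₂1)
  have hed : ¬ e ≤ d := by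
    intro h
    have h1 : e ≤ ⊥ := hEF ▸ le_inf heE (h.trans inf_le_right)
    rw [le_bot_iff] at h1
    have := he.1
    rw [h1, finrank_bot] at this
    omega
  have hfr : finrank F (e ⊔ d : Submodule F V) = 3 := by
    rw [sup_comm, sup_point_finrank he.1 hed, hd2]
  exact (Submodule.eq_of_le_of_finrank_le (sup_le (point_le_HexW hhex he) hdW) (by
    rw [hfr, hhex.w_plane e he])).symm

end Aux9

/-- Lemma A.2: let `𝓖` be a generalized hexagon with parameters `q, q`
embedded in a polar space of type `Sp(6,q)` or `O(7,q)` with `W₂(x) = x^⊥`.  If `a, b`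
are opposite points and `H = ⟨W(a), W(b)⟩`, then `H = E ⊕ F` for totally
isotropic/singular planes `E, F` such that for points `e ≤ E`, `f ≤ F` the line `⟨e,f⟩`
is a hexagon line iff `e ⟂ f`; moreover `W(e) = ⟨e, e^⊥ ∩ F⟩` for every point `e ≤ E`. -/
theorem hexagon_opposite_pair_decomposition
    (B : LinearMap.BilinForm F V) (hnd : B.Nondegenerate) (hrefl : B.IsRefl)
    (htype : (finrank F V = 6 ∧ ∀ v : V, B v v = 0) ∨
      (finrank F V = 7 ∧ ∀ u v : V, B u v = B v u))
    (𝓛 : Set (Submodule F V)) (hhex : IsHexagonEmbedding B 𝓛)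
    (a b : Submodule F V) (ha : IsIsoPoint B a) (hb : IsIsoPoint B b)
    (hopp : ¬ HexDle2 B 𝓛 a b) :
    ∃ E Fp : Submodule F V,
      finrank F E = 3 ∧ finrank F Fp = 3 ∧
      (∀ u ∈ E, ∀ w ∈ E, B u w = 0) ∧ (∀ u ∈ Fp, ∀ w ∈ Fp, B u w = 0) ∧
      E ⊓ Fp = ⊥ ∧ E ⊔ Fp = HexW 𝓛 a ⊔ HexW 𝓛 b ∧
      (∀ e f : Submodule F V, IsIsoPoint B e → IsIsoPoint B f → e ≤ E → f ≤ Fp →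
        ((e ⊔ f) ∈ 𝓛 ↔ ∀ u ∈ e, ∀ v ∈ f, B u v = 0)) ∧
      (∀ e : Submodule F V, IsIsoPoint B e → e ≤ E →
        HexW 𝓛 e = e ⊔ (B.orthogonal e ⊓ Fp)) := by
  have hdim : finrank F V ≤ 7 := by
    rcases htype with ⟨h, _⟩ | ⟨h, _⟩ <;> omega
  have hopp' : ¬ HexDle2 B 𝓛 b a := fun h => hopp h.symm'
  refine ⟨hexE B 𝓛 a b, hexE B 𝓛 b a,
    hexE_finrank hnd hrefl hhex ha hb hopp,
    hexE_finrank hnd hrefl hhex hb ha hopp',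
    hexE_totIso hrefl hhex ha hb hopp,
    hexE_totIso hrefl hhex hb ha hopp',
    hexE_inf_hexE hnd hrefl hdim hhex ha hb hopp,
    hexE_sup_hexE hnd hrefl hdim hhex ha hb hopp, ?_, ?_⟩
  · intro e f hei hfi heE hfF
    constructor
    · intro hL u hu v hv
      exact hhex.lines_isotropic (e ⊔ f) hL u ((le_sup_left : e ≤ e ⊔ f) hu)
        v ((le_sup_right : f ≤ e ⊔ f) hv)
    · intro hperp
      exact (hex_main_adj hnd hrefl hdim hhex ha hb hopp hei.1 heE hfi.1 hfF
        hperp).sup_mem hhex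
  · intro e hei heE
    exact hexW_point_of_E hnd hrefl hdim hhex ha hb hopp hei heE
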